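/- For any locally small (possibly large) category K, the category PK of small presheaves on K is complete if and only if PK has all limits of representables; concretely, if and only if for every small category D and every functor S : D → K, the presheaf A ↦ lim_{d ∈ D} K(A, S d) : K^op → Set is small. -/

import Mathlib

open CategoryTheory CategoryTheory.Limits Opposite

universe w v v' u u'

/-- A functor `S : K ⥤ M` is (`w`-)small if it is the left Kan extension of its
restriction to some small full subcategory of `K`. -/
def IsSmallFunctor {K : Type u} [Category.{v} K] {M : Type u'} [Category.{v'} M]
    (S : K ⥤ M) : Prop :=
  ∃ P : K → Prop, Small.{w} (Subtype P) ∧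
    S.IsLeftKanExtension (𝟙 (ObjectProperty.ι P ⋙ S))

/-- Representable presheaves are small. -/
theorem isSmallFunctor_yoneda_obj {K : Type u} [Category.{v} K] (A : K) :
    IsSmallFunctor.{w} (yoneda.obj A) := by
  refine ⟨fun X => X = op A, ?_, ?_⟩
  · have : Subsingleton {X : Kᵒᵖ // X = op A} :=
      ⟨fun X Y => Subtype.ext (X.2.trans Y.2.symm)⟩
    infer_instance
  · set P : Kᵒᵖ → Prop := fun X => X = op A with hP
    set ι := ObjectProperty.ι P with hι
    constructor
    refine ⟨IsInitial.ofUniqueHom (fun E => StructuredArrow.homMk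
      (yonedaEquiv.symm (E.hom.app ⟨op A, rfl⟩ (𝟙 A))) ?_) ?_⟩
    · ext X f
      rcases X with ⟨X, rfl⟩
      have hnat := ConcreteCategory.congr_hom (E.hom.naturality
        (ObjectProperty.homMk f.op : (⟨op A, rfl⟩ : ObjectProperty.FullSubcategory P) ⟶ ⟨op A, rfl⟩)) (𝟙 A)
      simp [ι] at hnat ⊢
      exact hnat.symm
    · intro E m
      apply StructuredArrow.hom_ext
      ext Y (g : unop Y ⟶ A)
      have hx : m.right.app (op A) (𝟙 A) = E.hom.app ⟨op A, rfl⟩ (𝟙 A) :=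
        ConcreteCategory.congr_hom (NatTrans.congr_app m.w ⟨op A, rfl⟩) (𝟙 A)
      have hnat : m.right.app Y (g ≫ 𝟙 A) = E.right.map (Quiver.Hom.op g) (m.right.app (op A) (𝟙 A)) :=
        ConcreteCategory.congr_hom (m.right.naturality (Quiver.Hom.op g : op A ⟶ Y)) (𝟙 A)
      show m.right.app Y g = (yonedaEquiv.symm (E.hom.app ⟨op A, rfl⟩ (𝟙 A))).app Y g
      rw [Category.comp_id, hx] at hnat
      exact hnat

/-- The category of small presheaves on `K`. -/
abbrev SmallPresheaf (K : Type u) [Category.{v} K] : Type (max u (v + 1)) :=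
  ObjectProperty.FullSubcategory (fun F : Kᵒᵖ ⥤ Type v => IsSmallFunctor.{v} F)

/-- The Yoneda embedding of `K` into its category of small presheaves. -/
def smallYoneda (K : Type u) [Category.{v} K] : K ⥤ SmallPresheaf K where
  obj A := ⟨yoneda.obj A, isSmallFunctor_yoneda_obj A⟩
  map f := ObjectProperty.homMk (yoneda.map f)

/-- `L` is a limit of `S : C ⥤ A` weighted by `φ : C ⥤ Type v`, i.e. morphisms `a ⟶ L`
correspond, naturally in `a`, to natural transformations `φ ⟶ A(a, S-)`. -/
def IsWeightedLimit {C : Type u} [Category.{v} C] {A : Type u'} [Category.{v'} A]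
    (φ : C ⥤ Type v) (S : C ⥤ A) (L : A) : Prop :=
  ∃ e : ∀ a : A, (a ⟶ L) ≃
      ((φ ⋙ uliftFunctor.{v'}) ⟶ (S ⋙ coyoneda.obj (op a) ⋙ uliftFunctor.{v})),
    ∀ (a a' : A) (f : a' ⟶ a) (g : a ⟶ L) (c : C) (x : φ.obj c),
      (e a' (f ≫ g)).app c ⟨x⟩ = ⟨f ≫ ((e a g).app c ⟨x⟩).down⟩

/-- `L` is a colimit of `T : Cᵒᵖ ⥤ A` weighted by `φ : C ⥤ Type v`, i.e. morphisms `L ⟶ a`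
correspond, naturally in `a`, to natural transformations `φ ⟶ A(T-, a)`. -/
def IsWeightedColimit {C : Type u} [Category.{v} C] {A : Type u'} [Category.{v'} A]
    (φ : C ⥤ Type v) (T : Cᵒᵖ ⥤ A) (L : A) : Prop :=
  ∃ e : ∀ a : A, (L ⟶ a) ≃
      ((φ ⋙ uliftFunctor.{v'}) ⟶ (T.rightOp ⋙ yoneda.obj a ⋙ uliftFunctor.{v})),
    ∀ (a a' : A) (f : a ⟶ a') (g : L ⟶ a) (c : C) (x : φ.obj c),
      (e a' (g ≫ f)).app c ⟨x⟩ = ⟨((e a g).app c ⟨x⟩).down ≫ f⟩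

/-- A class of weights with small domains. -/
def WeightClass : Type (v + 1) :=
  ∀ C : Cat.{v, v}, (C ⥤ Type v) → Prop

/-- A category is `Φ`-complete if it has all `φ`-weighted limits for `φ ∈ Φ`. -/
def PhiComplete (Φ : WeightClass.{v}) (A : Type u) [Category.{v'} A] : Prop :=
  ∀ (C : Cat.{v, v}) (φ : C ⥤ Type v), Φ C φ →
    ∀ S : C ⥤ A, ∃ L : A, IsWeightedLimit φ S L

/-- A category is `Φ`-cocomplete if it has all `φ`-weighted colimits for `φ ∈ Φ`. -/
def PhiCocomplete (Φ : WeightClass.{v}) (A : Type u) [Category.{v'} A] : Prop :=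
  ∀ (C : Cat.{v, v}) (φ : C ⥤ Type v), Φ C φ →
    ∀ T : Cᵒᵖ ⥤ A, ∃ L : A, IsWeightedColimit φ T L

/-- A functor is `Φ`-continuous if it preserves all `φ`-weighted limits for `φ ∈ Φ`. -/
def PhiContinuous (Φ : WeightClass.{v}) {A : Type u} [Category.{v'} A]
    {B : Type u'} [Category.{w} B] (F : A ⥤ B) : Prop :=
  ∀ (C : Cat.{v, v}) (φ : C ⥤ Type v), Φ C φ →
    ∀ (S : C ⥤ A) (L : A), IsWeightedLimit φ S L → IsWeightedLimit φ (S ⋙ F) (F.obj L)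

/-- The closure of a collection `P` of objects of `A` under `Φ`-weighted colimits. -/
inductive PhiClosure (Φ : WeightClass.{v}) {A : Type u} [Category.{v'} A]
    (P : A → Prop) : A → Prop
  | base {X : A} (hX : P X) : PhiClosure Φ P X
  | colim {C : Cat.{v, v}} (φ : C ⥤ Type v) (hφ : Φ C φ) (T : Cᵒᵖ ⥤ A)
      (hT : ∀ c : Cᵒᵖ, PhiClosure Φ P (T.obj c)) {L : A}
      (hL : IsWeightedColimit φ T L) : PhiClosure Φ P L

/-- The smallness condition on a class of weights: for every small `C`, the closure of the
representables in the presheaf category of `C` under `Φ`-weighted colimits is small. -/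
def SmallnessCondition (Φ : WeightClass.{v}) : Prop :=
  ∀ C : Cat.{v, v}, EssentiallySmall.{v} (ObjectProperty.FullSubcategory (PhiClosure Φ
    (fun F : Cᵒᵖ ⥤ Type v => ∃ c : C, Nonempty (F ≅ yoneda.obj c))))

/-- The soundness condition on a class of weights: for every small `Φ`-complete `D` and every
`Φ`-continuous `ψ : D ⥤ Type v`, the weighted-colimit functor `ψ * (-) : [Dᵒᵖ, Type v] ⥤ Type v`
(i.e. the small-colimit-preserving extension of `ψ` along the Yoneda embedding) is
`Φ`-continuous. -/
def SoundnessCondition (Φ : WeightClass.{v}) : Prop :=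
  ∀ D : Cat.{v, v}, PhiComplete Φ D → ∀ ψ : D ⥤ Type v, PhiContinuous Φ ψ →
    ∀ T : (Dᵒᵖ ⥤ Type v) ⥤ Type v, PreservesColimitsOfSize.{v, v} T →
      Nonempty ((yoneda : D ⥤ _) ⋙ T ≅ ψ) → PhiContinuous Φ T

/-- `φ` belongs to the saturation of `Φ` if it lies in the closure of the representables
under `Φ`-weighted colimits in the presheaf category over its domain. -/
def InSaturation (Φ : WeightClass.{v}) (C : Cat.{v, v}) (φ : C ⥤ Type v) : Prop :=
  PhiClosure Φ (fun F : C ⥤ Type v => ∃ c : Cᵒᵖ, Nonempty (F ≅ coyoneda.obj c)) φ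

/-- A category `J` is `α`-filtered when every diagram with fewer than `α` arrows
admits a cocone. -/
def IsCardinalFiltered (J : Type u) [Category.{v'} J] (α : Cardinal.{v}) : Prop :=
  ∀ D : Cat.{v, v}, Cardinal.mk (Arrow D) < α → ∀ F : D ⥤ J, Nonempty (Cocone F)

/-- An object `X` is `α`-presentable when its hom-functor preserves `α`-filtered colimits. -/
def IsPresentableObj {K : Type u} [Category.{v} K] (α : Cardinal.{v}) (X : K) : Prop :=
  ∀ J : Cat.{v, v}, IsCardinalFiltered J α →
    PreservesColimitsOfShape J (coyoneda.obj (op X))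

/-- `K` is locally `α`-presentable: it is cocomplete and has a small full subcategory of
`α`-presentable objects such that every object is an `α`-filtered colimit of objects
from it. -/
def IsLocallyPresentableAt (K : Type u) [Category.{v} K] (α : Cardinal.{v}) : Prop :=
  HasColimitsOfSize.{v, v} K ∧ α.IsRegular ∧
    ∃ P : K → Prop, Small.{v} (Subtype P) ∧ (∀ X, P X → IsPresentableObj α X) ∧
      ∀ X : K, ∃ J : Cat.{v, v}, IsCardinalFiltered J α ∧
        ∃ (F : J ⥤ K) (c : Cocone F),
          (∀ j, P (F.obj j)) ∧ c.pt = X ∧ Nonempty (IsColimit c)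

/-- `K` is locally presentable. -/
def IsLocallyPresentable (K : Type u) [Category.{v} K] : Prop :=
  ∃ α : Cardinal.{v}, IsLocallyPresentableAt K α

/-- `PF : PK ⥤ PL` is the (essentially unique) functor sending a small presheaf `X` to the
left Kan extension of `X` along `Fᵒᵖ`. -/
def IsPshExtensionOf {K : Type u} {L : Type u'} [Category.{v} K] [Category.{v} L]
    (F : K ⥤ L) (PF : SmallPresheaf K ⥤ SmallPresheaf L) : Prop :=
  ∃ ε : ObjectProperty.ι (fun X : Kᵒᵖ ⥤ Type v => IsSmallFunctor.{v} X) ⟶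
      PF ⋙ ObjectProperty.ι (fun X : Lᵒᵖ ⥤ Type v => IsSmallFunctor.{v} X) ⋙
        (Functor.whiskeringLeft Kᵒᵖ Lᵒᵖ (Type v)).obj F.op,
    ∀ X : SmallPresheaf K, Functor.IsLeftKanExtension ((PF.obj X).obj) (ε.app X)

open MonoidalCategory in
/-- `D` is the Day convolution `∫^{A,B} K(-, A ⊗ B) × F A × G B` of the presheaves
`F` and `G`: it carries a universal wedge. -/
def IsDayConvolution {K : Type u} [Category.{v} K] [MonoidalCategory K]
    (F G D : Kᵒᵖ ⥤ Type v) : Prop :=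
  ∃ u : ∀ A B : K, F.obj (op A) → G.obj (op B) → D.obj (op (A ⊗ B)),
    (∀ (A A' B B' : K) (f : A' ⟶ A) (g : B' ⟶ B) (x : F.obj (op A)) (y : G.obj (op B)),
      u A' B' (F.map f.op x) (G.map g.op y)
        = D.map (MonoidalCategory.tensorHom f g).op (u A B x y)) ∧
    ∀ (H : Kᵒᵖ ⥤ Type v)
      (p : ∀ A B : K, F.obj (op A) → G.obj (op B) → H.obj (op (A ⊗ B))),
      (∀ (A A' B B' : K) (f : A' ⟶ A) (g : B' ⟶ B) (x : F.obj (op A)) (y : G.obj (op B)),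
        p A' B' (F.map f.op x) (G.map g.op y)
          = H.map (MonoidalCategory.tensorHom f g).op (p A B x y)) →
      ∃! τ : D ⟶ H, ∀ (A B : K) (x : F.obj (op A)) (y : G.obj (op B)),
        τ.app (op (A ⊗ B)) (u A B x y) = p A B x y

/-- The restricted Yoneda embedding of `M` into presheaves on the full subcategory of
`β`-presentable objects. -/
def restrictedYoneda (M : Type u) [Category.{v} M] (β : Cardinal.{v}) :
    M ⥤ ((ObjectProperty.FullSubcategory (IsPresentableObj β : M → Prop))ᵒᵖ ⥤ Type v) :=
  yoneda ⋙ (Functor.whiskeringLeft _ _ _).obj (ObjectProperty.ι _).op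


/-!
Evaluation `PK ⥤ Type` at `X` is corepresented by `y X`, so limits in `PK` are computed
pointwise; this gives the forward direction.

Conversely, a presheaf `G` is small iff for some small set `P` of objects every element of
`G X` is `G φ y` with `y ∈ G A`, `A ∈ P`, and any two such presentations are joined by a zigzag:
this is the pointwise description of `G` as the left Kan extension of its restriction to `P`.
For the pointwise limit `L` of small presheaves `F j`, an element `x ∈ L X` is hit by a cone
over a *pattern*: a small diagram in `K` made of presentations of the components `x j` and of
zigzags witnessing that they are compatible along the arrows of the index category. The limit
of representables over a pattern is small by hypothesis and the patterns form a small set, so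
the objects presenting these limits present `L`; two presentations of one element are joined
through a pattern containing the zigzags of both and zigzags between their roots.
-/

lemma Relation.EqvGen.map {α β : Type*} {r : α → α → Prop} {s : β → β → Prop} (f : α → β)
    (hf : ∀ a b, r a b → s (f a) (f b)) {a b : α} (h : Relation.EqvGen r a b) :
    Relation.EqvGen s (f a) (f b) := by
  induction h with
  | rel _ _ h => exact .rel _ _ (hf _ _ h)
  | refl => exact .refl _
  | symm _ _ _ ih => exact ih.symm
  | trans _ _ _ _ _ ih₁ ih₂ => exact ih₁.trans _ _ _ ih₂

lemma Relation.ReflTransGen.exists_seq {α : Type*} {r : α → α → Prop} {a b : α}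
    (h : Relation.ReflTransGen r a b) :
    ∃ (n : ℕ) (c : ℕ → α), c 0 = a ∧ c n = b ∧ ∀ i < n, r (c i) (c (i + 1)) := by
  induction h using Relation.ReflTransGen.head_induction_on with
  | refl => exact ⟨0, fun _ => b, rfl, rfl, fun _ h => absurd h (Nat.not_lt_zero _)⟩
  | head hac _ ih =>
    obtain ⟨n, c, hc0, hcn, hc⟩ := ih
    subst hc0 hcn
    refine ⟨n + 1, fun | 0 => _ | i + 1 => c i, rfl, rfl, ?_⟩
    rintro (_ | i) hi
    exacts [hac, hc i (by omega)]

lemma Relation.EqvGen.exists_seq {α : Type*} {r : α → α → Prop} {a b : α}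
    (h : Relation.EqvGen r a b) :
    ∃ (n : ℕ) (c : ℕ → α), c 0 = a ∧ c n = b ∧ ∀ i < n, Relation.SymmGen r (c i) (c (i + 1)) :=
  (Relation.EqvGen.reflTransGen_symmGen (r := r) ▸ h).exists_seq

section Presentations

variable {C : Type u} [Category.{v} C]

structure Presentation (P : C → Prop) (G : C ⥤ Type v) (X : C) : Type (max u v) where
  obj : C
  mem : P obj
  hom : obj ⟶ X
  elt : G.obj obj

namespace Presentation

variable {P P' : C → Prop} {G H : C ⥤ Type v} {X W : C}

def val (r : Presentation P G X) : G.obj X := G.map r.hom r.elt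

def Step (r s : Presentation P G X) : Prop :=
  ∃ u : r.obj ⟶ s.obj, u ≫ s.hom = r.hom ∧ G.map u r.elt = s.elt

lemma Step.of_eq {r s : Presentation P G X} (h : r = s) : Step r s :=
  h ▸ ⟨𝟙 _, Category.id_comp _, by simp⟩

lemma Step.map_elt_eq {r s : Presentation P G X} (h : Step r s) {a : r.obj ⟶ W} {b : s.obj ⟶ W}
    (hab : ∀ u : r.obj ⟶ s.obj, u ≫ s.hom = r.hom → u ≫ b = a) :
    G.map b s.elt = G.map a r.elt := by
  obtain ⟨u, hu, hy⟩ := h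
  rw [← hy, ← hab u hu, Functor.map_comp_apply]

lemma map_elt_eq_of_chain {κ : ℕ → Presentation P G X} {n : ℕ}
    (hκ : ∀ i < n, Relation.SymmGen Step (κ i) (κ (i + 1))) (s : ∀ i, (κ i).obj ⟶ W)
    (hs : ∀ i k (u : (κ i).obj ⟶ (κ k).obj), u ≫ (κ k).hom = (κ i).hom → u ≫ s k = s i) :
    G.map (s n) (κ n).elt = G.map (s 0) (κ 0).elt := by
  suffices ∀ i ≤ n, G.map (s i) (κ i).elt = G.map (s 0) (κ 0).elt from this n le_rfl
  intro i hi
  induction i with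
  | zero => rfl
  | succ i ih =>
    rw [← ih (by omega)]
    rcases hκ i (by omega) with h | h
    · exact h.map_elt_eq (hs _ _)
    · exact (h.map_elt_eq (hs _ _)).symm

def map (f : G ⟶ H) (r : Presentation P G X) : Presentation P H X :=
  ⟨r.obj, r.mem, r.hom, f.app r.obj r.elt⟩

lemma val_map (f : G ⟶ H) (r : Presentation P G X) : (r.map f).val = f.app X r.val :=
  (NatTrans.naturality_apply f r.hom r.elt).symm

lemma map_comp {H' : C ⥤ Type v} (f : G ⟶ H) (g : H ⟶ H') (r : Presentation P G X) :
    r.map (f ≫ g) = (r.map f).map g := rfl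

lemma Step.map (f : G ⟶ H) {r s : Presentation P G X} (h : Step r s) :
    Step (r.map f) (s.map f) := by
  obtain ⟨u, hu, hy⟩ := h
  exact ⟨u, hu, (NatTrans.naturality_apply f u r.elt).symm.trans (congrArg (f.app s.obj) hy)⟩

def widen (hPP' : P ≤ P') (r : Presentation P G X) : Presentation P' G X :=
  ⟨r.obj, hPP' _ r.mem, r.hom, r.elt⟩

lemma Step.widen (hPP' : P ≤ P') {r s : Presentation P G X} (h : Step r s) :
    Step (r.widen hPP') (s.widen hPP') := h

variable (P G X) in
abbrev diagram : CostructuredArrow (ObjectProperty.ι P) X ⥤ Type v :=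
  CostructuredArrow.proj (ObjectProperty.ι P) X ⋙ ObjectProperty.ι P ⋙ G

variable (P G X) in
def equivSigma : (Σ j, (diagram P G X).obj j) ≃ Presentation P G X where
  toFun p := ⟨p.1.left.obj, p.1.left.property, p.1.hom, p.2⟩
  invFun r := ⟨CostructuredArrow.mk (S := ObjectProperty.ι P)
    (Y := (⟨r.obj, r.mem⟩ : ObjectProperty.FullSubcategory P)) r.hom, r.elt⟩
  left_inv _ := rfl
  right_inv _ := rfl

lemma step_equivSigma_iff (p q : Σ j, (diagram P G X).obj j) :
    Step (equivSigma P G X p) (equivSigma P G X q) ↔ (diagram P G X).ColimitTypeRel p q := by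
  constructor
  · rintro ⟨u, hu, hy⟩
    exact ⟨CostructuredArrow.homMk (ObjectProperty.homMk u) hu, hy.symm⟩
  · rintro ⟨f, hf⟩
    exact ⟨f.left.hom, CostructuredArrow.w f, hf.symm⟩

lemma eqvGen_step_equivSigma_iff (p q : Σ j, (diagram P G X).obj j) :
    Relation.EqvGen Step (equivSigma P G X p) (equivSigma P G X q) ↔
      Relation.EqvGen (diagram P G X).ColimitTypeRel p q := by
  refine ⟨fun h => ?_, fun h => h.map _ fun a b => (step_equivSigma_iff a b).2⟩
  simpa using h.map (equivSigma P G X).symm fun a b hab => by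
    rw [← step_equivSigma_iff]
    simpa using hab

end Presentation

open Presentation

def IsPresentedOn (P : C → Prop) (G : C ⥤ Type v) : Prop :=
  ∀ X : C, Function.Surjective (val : Presentation P G X → G.obj X) ∧
    ∀ r r' : Presentation P G X, r.val = r'.val → Relation.EqvGen Step r r'

lemma isPointwiseLeftKanExtensionAt_iff (P : C → Prop) (G : C ⥤ Type v) (X : C) :
    Nonempty (Functor.LeftExtension.IsPointwiseLeftKanExtensionAt
      (.mk G (𝟙 (ObjectProperty.ι P ⋙ G))) X) ↔
    Function.Surjective (val : Presentation P G X → G.obj X) ∧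
    ∀ r r' : Presentation P G X, r.val = r'.val → Relation.EqvGen Step r r' := by
  rw [Functor.LeftExtension.IsPointwiseLeftKanExtensionAt, Types.isColimit_iff_coconeTypesIsColimit]
  set c := (diagram P G X).coconeTypesEquiv.symm _
  have hdesc : ∀ p, (diagram P G X).descColimitType c (Quot.mk _ p) = (equivSigma P G X p).val :=
    fun p => rfl
  have hsurj : Function.Surjective ((diagram P G X).descColimitType c) ↔
      Function.Surjective (val : Presentation P G X → G.obj X) := by
    refine ⟨fun h x => ?_, fun h x => ?_⟩
    · obtain ⟨q, rfl⟩ := h x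
      obtain ⟨p, rfl⟩ := Quot.mk_surjective q
      exact ⟨_, (hdesc p).symm⟩
    · obtain ⟨r, rfl⟩ := h x
      obtain ⟨p, rfl⟩ := (equivSigma P G X).surjective r
      exact ⟨_, hdesc p⟩
  have hinj : Function.Injective ((diagram P G X).descColimitType c) ↔
      ∀ r r' : Presentation P G X, r.val = r'.val → Relation.EqvGen Step r r' := by
    constructor
    · intro hinj r r' hrr'
      obtain ⟨p, rfl⟩ := (equivSigma P G X).surjective r
      obtain ⟨q, rfl⟩ := (equivSigma P G X).surjective r'
      rw [eqvGen_step_equivSigma_iff]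
      exact Quot.eqvGen_exact (hinj (by rw [hdesc, hdesc, hrr']))
    · intro h x y hxy
      induction x using Quot.ind
      induction y using Quot.ind
      rw [hdesc, hdesc] at hxy
      exact Quot.eqvGen_sound ((eqvGen_step_equivSigma_iff _ _).1 (h _ _ hxy))
  exact ⟨fun h => ⟨hsurj.1 h.bijective.2, hinj.1 h.bijective.1⟩,
    fun h => ⟨hinj.2 h.2, hsurj.2 h.1⟩⟩

instance small_costructuredArrow_ι (P : C → Prop) [Small.{v} (Subtype P)] (X : C) :
    Small.{v} (CostructuredArrow (ObjectProperty.ι P) X) :=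
  small_of_surjective (f := fun p : Σ A : Subtype P, (A.1 ⟶ X) =>
    CostructuredArrow.mk (S := ObjectProperty.ι P)
      (Y := (⟨p.1.1, p.1.2⟩ : ObjectProperty.FullSubcategory P)) p.2)
    fun j => ⟨⟨⟨j.left.obj, j.left.property⟩, j.hom⟩, rfl⟩

theorem isSmallFunctor_iff_exists_isPresentedOn (G : C ⥤ Type v) :
    IsSmallFunctor.{v} G ↔ ∃ P : C → Prop, Small.{v} (Subtype P) ∧ IsPresentedOn P G := by
  refine exists_congr fun P => and_congr_right fun hP => ?_
  rw [IsPresentedOn, ← forall_congr' (isPointwiseLeftKanExtensionAt_iff P G)]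
  constructor
  · intro _ X
    exact ⟨Functor.isPointwiseLeftKanExtensionOfIsLeftKanExtension G _ X⟩
  · intro h
    exact Functor.LeftExtension.IsPointwiseLeftKanExtension.isLeftKanExtension
      (E := Functor.LeftExtension.mk G _) fun X => (h X).some

namespace IsPresentedOn

variable {P P' : C → Prop} {G H : C ⥤ Type v}

lemma mono (hG : IsPresentedOn P G) (hPP' : P ≤ P') : IsPresentedOn P' G := by
  intro X
  refine ⟨fun x => ?_, fun r r' hrr' => ?_⟩
  · obtain ⟨r, rfl⟩ := (hG X).1 x
    exact ⟨r.widen hPP', rfl⟩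
  · have pull : ∀ s : Presentation P' G X, ∃ s₀ : Presentation P G X,
        s₀.val = s.val ∧ Relation.EqvGen Step (s₀.widen hPP') s := by
      intro s
      obtain ⟨q, hq⟩ := (hG s.obj).1 s.elt
      refine ⟨⟨q.obj, q.mem, q.hom ≫ s.hom, q.elt⟩, ?_, .rel _ _ ⟨q.hom, rfl, hq⟩⟩
      simp only [val, Functor.map_comp_apply]
      exact congrArg _ hq
    obtain ⟨r₀, hr₀, hr⟩ := pull r
    obtain ⟨r₀', hr₀', hr'⟩ := pull r'
    have h₀ := ((hG X).2 r₀ r₀' (by rw [hr₀, hr₀', hrr'])).map (widen hPP') fun _ _ =>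
      Step.widen hPP'
    exact (hr.symm _ _).trans _ _ _ (h₀.trans _ _ _ hr')

lemma eqvGen_step_map (hG : IsPresentedOn P G) (f : G ⟶ H) {X : C} {r s : Presentation P G X}
    (h : r.val = s.val) : Relation.EqvGen Step (r.map f) (s.map f) :=
  ((hG X).2 r s h).map (Presentation.map f) fun _ _ => Step.map f

lemma eqvGen_step_map_of_lift (hG : IsPresentedOn P G) (f : G ⟶ H) {X : C}
    (r : Presentation P H X) {y : G.obj r.obj} (hy : f.app _ y = r.elt) {s : Presentation P G X}
    (hs : s.val = G.map r.hom y) : Relation.EqvGen Step r (s.map f) := by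
  have h := hG.eqvGen_step_map f (r := ⟨r.obj, r.mem, r.hom, y⟩) hs.symm
  rwa [show Presentation.map f ⟨r.obj, r.mem, r.hom, y⟩ = r by rw [Presentation.map, hy]] at h

lemma of_iso (hG : IsPresentedOn P G) (e : G ≅ H) : IsPresentedOn P H := by
  intro X
  refine ⟨fun x => ?_, fun r r' hrr' => ?_⟩
  · obtain ⟨r, hr⟩ := (hG X).1 (e.inv.app X x)
    exact ⟨r.map e.hom, by simp [val_map, hr]⟩
  · have := hG.eqvGen_step_map e.hom (r := r.map e.inv) (s := r'.map e.inv)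
      (by rw [val_map, val_map, hrr'])
    rwa [← map_comp, ← map_comp, e.inv_hom_id] at this

end IsPresentedOn

lemma IsSmallFunctor.of_iso {G H : C ⥤ Type v} (hG : IsSmallFunctor.{v} G) (e : G ≅ H) :
    IsSmallFunctor.{v} H := by
  rw [isSmallFunctor_iff_exists_isPresentedOn] at hG ⊢
  obtain ⟨P, hP, hG⟩ := hG
  exact ⟨P, hP, hG.of_iso e⟩

end Presentations

section LimitsOfRepresentables

variable {K : Type u} [Category.{v} K]

def smallPresheafEvaluationCorepresentableBy (X : K) :
    (ObjectProperty.ι (fun F : Kᵒᵖ ⥤ Type v => IsSmallFunctor.{v} F) ⋙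
      (evaluation Kᵒᵖ (Type v)).obj (op X)).CorepresentableBy ((smallYoneda K).obj X) where
  homEquiv := InducedCategory.homEquiv.trans yonedaEquiv
  homEquiv_comp g f := yonedaEquiv_comp f.hom g.hom

instance : PreservesLimitsOfSize.{v, v}
    (ObjectProperty.ι (fun F : Kᵒᵖ ⥤ Type v => IsSmallFunctor.{v} F)) :=
  preservesLimits_of_evaluation _ fun X =>
    have := (smallPresheafEvaluationCorepresentableBy X.unop).isCorepresentable
    inferInstance

theorem isSmallFunctor_flip_comp_lim_of_hasLimits [HasLimitsOfSize.{v, v} (SmallPresheaf K)]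
    (D : Cat.{v, v}) (S : D ⥤ K) : IsSmallFunctor.{v} ((S ⋙ yoneda).flip ⋙ lim) :=
  (limit (S ⋙ smallYoneda K)).property.of_iso <|
    preservesLimitIso (ObjectProperty.ι _) (S ⋙ smallYoneda K) ≪≫ limitIsoFlipCompLim (S ⋙ yoneda)

end LimitsOfRepresentables

section Patterns

variable {K : Type u} [Category.{v} K] {J : Type v} [Category.{v} J]

/-- Vertex names of patterns, fixed so that patterns form a small set: `root j` carries the
component in `F j`, `chain d i` the zigzag witnessing compatibility along the arrow `d`, and
`link j i`, `inl`, `inr` serve to join two patterns. -/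
inductive Vertex (J : Type v) [Category.{v} J] : Type v
  | root : J → Vertex J
  | chain : (Σ j j' : J, j ⟶ j') → ℕ → Vertex J
  | link : J → ℕ → Vertex J
  | inl : Vertex J → Vertex J
  | inr : Vertex J → Vertex J

/-- A small diagram in `K` on objects from `P`, with a label in `F j` at a root vertex for each
`j`; every cone over it with apex `W` evaluates the labels to a family in `F j W`. -/
structure Pattern (F : J ⥤ Kᵒᵖ ⥤ Type v) (P : Kᵒᵖ → Prop) where
  obj : Vertex J → Subtype P
  edges : Set (Σ v w : Vertex J, (obj v).1.unop ⟶ (obj w).1.unop)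
  root : J → Vertex J
  label : ∀ j, (F.obj j).obj (obj (root j)).1

namespace Pattern

variable {F : J ⥤ Kᵒᵖ ⥤ Type v} {P : Kᵒᵖ → Prop} (π : Pattern F P)

instance [Small.{v} (Subtype P)] : Small.{v} (Pattern F P) :=
  small_of_injective (f := fun π : Pattern F P =>
    (⟨π.obj, π.root, π.edges, π.label⟩ : Σ (obj : Vertex J → Subtype P) (root : J → Vertex J),
      Set (Σ v w : Vertex J, (obj v).1.unop ⟶ (obj w).1.unop) ×
        ∀ j, (F.obj j).obj (obj (root j)).1))
    (Function.LeftInverse.injective (g := fun x => ⟨x.1, x.2.2.1, x.2.1, x.2.2.2⟩) fun _ => rfl)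

def Vert (_ : Pattern F P) : Type v := Vertex J

instance : Quiver π.Vert := ⟨fun v w => {f // ⟨v, w, f⟩ ∈ π.edges}⟩

def diagram : Paths π.Vert ⥤ K :=
  Paths.lift ({ obj := fun v => (π.obj v).1.unop, map := fun e => e.1 } : π.Vert ⥤q K)

lemma diagram_map_toPath {v w : π.Vert} (f : v ⟶ w) : π.diagram.map f.toPath = f.1 :=
  Paths.lift_toPath _ f

variable {π} {W : Kᵒᵖ}

lemma cone_edge (c : π.diagram.cones.obj W)
    {e : Σ v w : Vertex J, (π.obj v).1.unop ⟶ (π.obj w).1.unop} (he : e ∈ π.edges) :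
    c.app e.1 ≫ e.2.2 = c.app e.2.1 := by
  have := c.naturality (Quiver.Hom.toPath (⟨e.2.2, he⟩ : @Quiver.Hom π.Vert _ e.1 e.2.1))
  erw [diagram_map_toPath] at this
  exact this.symm.trans (Category.id_comp _)

variable (π) in
def coneMk (s : ∀ v, W.unop ⟶ (π.obj v).1.unop) (hs : ∀ e ∈ π.edges, s e.1 ≫ e.2.2 = s e.2.1) :
    π.diagram.cones.obj W :=
  Paths.liftNatTrans (fun v => s v) fun f => by
    refine (Category.id_comp _).trans ?_
    erw [diagram_map_toPath]
    exact (hs _ f.2).symm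

def rootValue (c : π.diagram.cones.obj W) (j : J) : (F.obj j).obj W :=
  (F.obj j).map (c.app (π.root j)).op (π.label j)

variable (π) in
def IsValid : Prop :=
  ∀ (W : Kᵒᵖ) (c : π.diagram.cones.obj W) {j j' : J} (δ : j ⟶ j'),
    (F.map δ).app W (rootValue c j) = rootValue c j'

def toLimit (hπ : π.IsValid) : π.diagram.cones ⟶ F.flip ⋙ Functor.sectionsFunctor J where
  app W := ↾fun c => ⟨rootValue c, hπ W c⟩
  naturality W W' ψ := by
    ext c
    refine Subtype.ext (funext fun j => ?_)
    show rootValue (π.diagram.cones.map ψ c) j = (F.obj j).map ψ (rootValue c j)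
    exact Functor.map_comp_apply (F.obj j) _ _ _

/-- Taking every morphism over `X` as an edge makes each `Step` between presentations over `X`
an edge, while the legs `pt v` still form a cone. -/
def spanned (X : Kᵒᵖ) (pt : Vertex J → Σ A : Subtype P, A.1 ⟶ X) (root : J → Vertex J)
    (label : ∀ j, (F.obj j).obj (pt (root j)).1.1) : Pattern F P where
  obj v := (pt v).1
  edges := {e | e.2.2.op ≫ (pt e.1).2 = (pt e.2.1).2}
  root := root
  label := label

section Spanned

variable {X : Kᵒᵖ} {pt : Vertex J → Σ A : Subtype P, A.1 ⟶ X} {root : J → Vertex J}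
  {label : ∀ j, (F.obj j).obj (pt (root j)).1.1}

def spannedCone : (spanned X pt root label).diagram.cones.obj X :=
  coneMk _ (fun v => (pt v).2.unop) fun _ he => congrArg Quiver.Hom.unop he

lemma spanned_comp_app_op (c : (spanned X pt root label).diagram.cones.obj W) {v w : Vertex J}
    (u : (pt v).1.1 ⟶ (pt w).1.1) (hu : u ≫ (pt w).2 = (pt v).2) :
    u ≫ (c.app w).op = (c.app v).op :=
  congrArg Quiver.Hom.op (cone_edge c (e := ⟨w, v, u.unop⟩) hu)

end Spanned

open Presentation in
theorem exists_pattern (hF : ∀ j, IsPresentedOn P (F.obj j)) {X : Kᵒᵖ}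
    (x : (F.flip ⋙ Functor.sectionsFunctor J).obj X) :
    ∃ (π : Pattern F P) (hπ : π.IsValid) (z : π.diagram.cones.obj X),
      (π.toLimit hπ).app X z = x := by
  choose t ht using fun j => (hF j X).1 (x.1 j)
  let push (d : Σ j j' : J, j ⟶ j') : Presentation P (F.obj d.2.1) X :=
    ⟨(t d.1).obj, (t d.1).mem, (t d.1).hom, (F.map d.2.2).app _ (t d.1).elt⟩
  have hpush (d : Σ j j' : J, j ⟶ j') : (push d).val = (t d.2.1).val := by
    rw [ht, val, ← NatTrans.naturality_apply]
    exact (congrArg _ (ht d.1)).trans (x.2 d.2.2)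
  choose n c hc0 hcn hc using fun d => ((hF d.2.1 X).2 _ _ (hpush d)).exists_seq
  let pt : Vertex J → Σ A : Subtype P, A.1 ⟶ X := Vertex.rec
    (fun j => ⟨⟨(t j).obj, (t j).mem⟩, (t j).hom⟩)
    (fun d i => ⟨⟨(c d i).obj, (c d i).mem⟩, (c d i).hom⟩)
    (fun j _ => ⟨⟨(t j).obj, (t j).mem⟩, (t j).hom⟩) (fun _ p => p) (fun _ p => p)
  refine ⟨spanned X pt Vertex.root fun j => (t j).elt, ?_, spannedCone,
    Subtype.ext (funext fun j => ht j)⟩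
  intro W C j j' δ
  let d : Σ j j' : J, j ⟶ j' := ⟨j, j', δ⟩
  have hC := fun (v w : Vertex J) u hu => spanned_comp_app_op C (v := v) (w := w) u hu
  calc (F.map δ).app W (rootValue C j)
      = (F.obj j').map (C.app (.root j)).op (push d).elt := NatTrans.naturality_apply (F.map δ) _ _
    _ = (F.obj j').map (C.app (.chain d 0)).op (c d 0).elt :=
      ((Step.of_eq (hc0 d).symm).map_elt_eq (hC (.root j) (.chain d 0))).symm
    _ = (F.obj j').map (C.app (.chain d (n d))).op (c d (n d)).elt :=
      (map_elt_eq_of_chain (hc d) _ fun i k => hC (.chain d i) (.chain d k)).symm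
    _ = rootValue C j' := ((Step.of_eq (hcn d)).map_elt_eq (hC (.chain d (n d)) (.root j'))).symm

open Presentation in
theorem exists_join (hF : ∀ j, IsPresentedOn P (F.obj j)) {π π' : Pattern F P}
    (hπ : π.IsValid) (hπ' : π'.IsValid) {X : Kᵒᵖ} (z : π.diagram.cones.obj X)
    (z' : π'.diagram.cones.obj X) (h : (π.toLimit hπ).app X z = (π'.toLimit hπ').app X z') :
    ∃ (ρ : Pattern F P) (hρ : ρ.IsValid) (ι : ρ.diagram.cones ⟶ π.diagram.cones)
      (ι' : ρ.diagram.cones ⟶ π'.diagram.cones) (w : ρ.diagram.cones.obj X),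
      ι ≫ π.toLimit hπ = ρ.toLimit hρ ∧ ι' ≫ π'.toLimit hπ' = ρ.toLimit hρ ∧
        ι.app X w = z ∧ ι'.app X w = z' := by
  let tl (j : J) : Presentation P (F.obj j) X :=
    ⟨(π.obj (π.root j)).1, (π.obj (π.root j)).2, (z.app (π.root j)).op, π.label j⟩
  let tr (j : J) : Presentation P (F.obj j) X :=
    ⟨(π'.obj (π'.root j)).1, (π'.obj (π'.root j)).2, (z'.app (π'.root j)).op, π'.label j⟩
  choose n c hc0 hcn hc using fun j =>
    ((hF j X).2 (tl j) (tr j) (congrArg (fun s => s.1 j) h)).exists_seq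
  let pt : Vertex J → Σ A : Subtype P, A.1 ⟶ X := fun
    | .inl v => ⟨π.obj v, (z.app v).op⟩
    | .inr v => ⟨π'.obj v, (z'.app v).op⟩
    | .link j i => ⟨⟨(c j i).obj, (c j i).mem⟩, (c j i).hom⟩
    | .root j => ⟨π.obj (π.root j), (z.app (π.root j)).op⟩
    | .chain d _ => ⟨π.obj (π.root d.1), (z.app (π.root d.1)).op⟩
  let ρ : Pattern F P := spanned X pt (fun j => .inl (π.root j)) π.label
  let ι : ρ.diagram.cones ⟶ π.diagram.cones :=
    { app W := ↾fun C => π.coneMk (fun v => C.app (.inl v)) fun e he =>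
        cone_edge C (e := ⟨.inl e.1, .inl e.2.1, e.2.2⟩) (congrArg Quiver.Hom.op (cone_edge z he))
      naturality W W' ψ := rfl }
  let ι' : ρ.diagram.cones ⟶ π'.diagram.cones :=
    { app W := ↾fun C => π'.coneMk (fun v => C.app (.inr v)) fun e he =>
        cone_edge C (e := ⟨.inr e.1, .inr e.2.1, e.2.2⟩) (congrArg Quiver.Hom.op (cone_edge z' he))
      naturality W W' ψ := rfl }
  have hρ : ρ.IsValid := fun W C _ _ δ => hπ W (ι.app W C) δ
  refine ⟨ρ, hρ, ι, ι', spannedCone, rfl, ?_, rfl, rfl⟩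
  ext W : 2
  refine ConcreteCategory.hom_ext _ _ fun C => Subtype.ext (funext fun j => ?_)
  have hC := fun (v w : Vertex J) u hu => spanned_comp_app_op C (v := v) (w := w) u hu
  calc (F.obj j).map (C.app (.inr (π'.root j))).op (tr j).elt
      = (F.obj j).map (C.app (.link j (n j))).op (c j (n j)).elt :=
      (Step.of_eq (hcn j)).map_elt_eq (hC (.link j (n j)) (.inr (π'.root j)))
    _ = (F.obj j).map (C.app (.link j 0)).op (c j 0).elt :=
      map_elt_eq_of_chain (hc j) _ fun i k => hC (.link j i) (.link j k)
    _ = (F.obj j).map (C.app (.inl (π.root j))).op (tl j).elt :=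
      (Step.of_eq (hc0 j).symm).map_elt_eq (hC (.inl (π.root j)) (.link j 0))

open Presentation in
theorem exists_isPresentedOn_sections [Small.{v} (Subtype P)]
    (hcones : ∀ π : Pattern F P, IsSmallFunctor.{v} π.diagram.cones)
    (hF : ∀ j, IsPresentedOn P (F.obj j)) :
    ∃ B : Set Kᵒᵖ, Small.{v} B ∧ IsPresentedOn (· ∈ B) (F.flip ⋙ Functor.sectionsFunctor J) := by
  choose Q hQs hQ using fun π => (isSmallFunctor_iff_exists_isPresentedOn _).1 (hcones π)
  have (π : Pattern F P) : Small.{v} {A | Q π A} := hQs π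
  have hQB (π : Pattern F P) : Q π ≤ (· ∈ ⋃ π, {A | Q π A}) := fun A hA => Set.mem_iUnion.2 ⟨π, hA⟩
  refine ⟨⋃ π, {A | Q π A}, inferInstance, fun X => ⟨fun x => ?_, fun r r' hrr' => ?_⟩⟩
  · obtain ⟨π, hπ, z, rfl⟩ := exists_pattern hF x
    obtain ⟨s, rfl⟩ := (hQ π X).1 z
    exact ⟨(s.widen (hQB π)).map (π.toLimit hπ), val_map _ _⟩
  · obtain ⟨π, hπ, y, hy⟩ := exists_pattern hF r.elt
    obtain ⟨π', hπ', y', hy'⟩ := exists_pattern hF r'.elt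
    obtain ⟨ρ, hρ, ι, ι', w, hι, hι', hw, hw'⟩ := exists_join hF hπ hπ'
      (π.diagram.cones.map r.hom y) (π'.diagram.cones.map r'.hom y')
      (by rw [NatTrans.naturality_apply, NatTrans.naturality_apply, hy, hy']; exact hrr')
    obtain ⟨s, hs⟩ := (hQ ρ X).1 w
    have h₁ := ((hQ π).mono (hQB π)).eqvGen_step_map_of_lift _ r hy
      (s := (s.widen (hQB ρ)).map ι) (by rw [val_map]; exact (congrArg _ hs).trans hw)
    have h₂ := ((hQ π').mono (hQB π')).eqvGen_step_map_of_lift _ r' hy'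
      (s := (s.widen (hQB ρ)).map ι') (by rw [val_map]; exact (congrArg _ hs).trans hw')
    rw [← map_comp, hι] at h₁
    rw [← map_comp, hι'] at h₂
    exact h₁.trans _ _ _ (h₂.symm _ _)

end Pattern
end Patterns

section Assembly

variable {K : Type u} [Category.{v} K]

noncomputable def flipCompLimIsoCones {D : Type v} [Category.{v} D] (S : D ⥤ K) :
    (S ⋙ yoneda).flip ⋙ lim ≅ S.cones :=
  Functor.isoWhiskerLeft _ Types.limNatIsoSectionsFunctor ≪≫
    NatIso.ofComponents fun X => Equiv.toIso
      { toFun s := { app := s.1, naturality _ _ f := (Category.id_comp _).trans (s.2 f).symm }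
        invFun c := ⟨c.app, fun f => (c.naturality f).symm.trans (Category.id_comp _)⟩
        left_inv _ := rfl
        right_inv _ := rfl }

theorem isSmallFunctor_of_isLimit
    (hcones : ∀ (D : Cat.{v, v}) (S : D ⥤ K), IsSmallFunctor.{v} S.cones)
    {J : Type v} [Category.{v} J] {F : J ⥤ Kᵒᵖ ⥤ Type v} (hF : ∀ j, IsSmallFunctor.{v} (F.obj j))
    {c : Cone F} (hc : IsLimit c) : IsSmallFunctor.{v} c.pt := by
  choose P hPs hP using fun j => (isSmallFunctor_iff_exists_isPresentedOn _).1 (hF j)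
  have (j : J) : Small.{v} {A | P j A} := hPs j
  obtain ⟨B, hBs, hB⟩ := Pattern.exists_isPresentedOn_sections (P := (· ∈ ⋃ j, {A | P j A}))
    (fun π => hcones (Cat.of (Paths π.Vert)) π.diagram)
    (fun j => (hP j).mono fun A hA => Set.mem_iUnion.2 ⟨j, hA⟩)
  refine ((isSmallFunctor_iff_exists_isPresentedOn _).2 ⟨_, hBs, hB⟩).of_iso ?_
  exact (hc.conePointUniqueUpToIso (limit.isLimit F) ≪≫ limitIsoFlipCompLim F ≪≫
    Functor.isoWhiskerLeft F.flip Types.limNatIsoSectionsFunctor).symm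

theorem hasLimits_of_isSmallFunctor_cones
    (hcones : ∀ (D : Cat.{v, v}) (S : D ⥤ K), IsSmallFunctor.{v} S.cones) :
    HasLimitsOfSize.{v, v} (SmallPresheaf K) where
  has_limits_of_shape J _ :=
    have : ObjectProperty.IsClosedUnderLimitsOfShape
        (fun F : Kᵒᵖ ⥤ Type v => IsSmallFunctor.{v} F) J :=
      ⟨by rintro _ ⟨p⟩; exact isSmallFunctor_of_isLimit hcones p.prop_diag_obj p.isLimit⟩
    hasLimitsOfShape_of_closedUnderLimits _ _

end Assembly

/-- `PK` is complete iff it has all limits of representables, i.e. iff for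
every small diagram `S : D ⥤ K` the presheaf `A ↦ lim_d K(A, S d)` is small. -/
theorem statement7 {K : Type u} [Category.{v} K] :
    HasLimitsOfSize.{v, v} (SmallPresheaf K) ↔
      ∀ (D : Cat.{v, v}) (S : D ⥤ K),
        IsSmallFunctor.{v} ((S ⋙ yoneda).flip ⋙ lim) :=
  ⟨fun _ => isSmallFunctor_flip_comp_lim_of_hasLimits,
    fun h => hasLimits_of_isSmallFunctor_cones fun D S => (h D S).of_iso (flipCompLimIsoCones S)⟩
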